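/- For every integer m ≥ 7 with m ≡ 3 (mod 4) there exists a binary projective three-weight linear code C_2 of length n = 2^{m−2} + 2^{(m−3)/2}, dimension m and minimum distance 2^{m−3} with A_n(C_2) = 1. -/

import Mathlib

/-- Hamming weight of a binary vector: the number of nonzero coordinates. -/
noncomputable def wt {ι : Type*} (c : ι → ZMod 2) : ℕ := Nat.card {i : ι // c i ≠ 0}

/-- Number of codewords of Hamming weight `w` in a set of binary vectors. -/
noncomputable def weightCount {ι : Type*} (C : Set (ι → ZMod 2)) (w : ℕ) : ℕ :=
  Nat.card {c : ι → ZMod 2 // c ∈ C ∧ wt c = w}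

/-- The dual code: all vectors orthogonal (standard inner product) to every codeword. -/
def dualCode {ι : Type*} (C : Set (ι → ZMod 2)) : Set (ι → ZMod 2) :=
  {x | ∀ c ∈ C, ∑ᶠ i, x i * c i = 0}

/-- A code is projective if the minimum distance of its dual is at least 3. -/
def IsProjective {ι : Type*} (C : Set (ι → ZMod 2)) : Prop :=
  ∀ x ∈ dualCode C, x ≠ 0 → 3 ≤ wt x

/-- `d` is the minimum distance of `C`: the least Hamming weight of a nonzero codeword. -/
def IsMinDist {ι : Type*} (C : Set (ι → ZMod 2)) (d : ℕ) : Prop :=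
  (∃ c ∈ C, c ≠ 0 ∧ wt c = d) ∧ ∀ c ∈ C, c ≠ 0 → d ≤ wt c

/-- The number of nonzero Hamming weights occurring among codewords of `C`. -/
noncomputable def numNonzeroWeights {ι : Type*} (C : Set (ι → ZMod 2)) : ℕ :=
  Nat.card {i : ℕ | 1 ≤ i ∧ weightCount C i ≠ 0}

/-- The codewords of weight `w` in `C` hold a 2-design with index `lam`: every pair of
distinct coordinate positions lies in the support of exactly `lam` codewords of weight `w`. -/
def HoldsTwoDesign {ι : Type*} (C : Set (ι → ZMod 2)) (w lam : ℕ) : Prop :=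
  ∀ p q : ι, p ≠ q →
    Nat.card {c : ι → ZMod 2 // c ∈ C ∧ wt c = w ∧ c p ≠ 0 ∧ c q ≠ 0} = lam

/-! With `m = 2t + 1`, the code evaluates the affine functions `z ↦ ⟨x, z⟩ + β` on the
`2^(2t-1) + 2^(t-1)` zeros of the hyperbolic quadratic form `Q(a, b) = a ⬝ b` on `𝔽₂^t × 𝔽₂^t`.
Expanding the indicator of `{Q z = 0, ⟨x, z⟩ = c}` in the character `(-1)^·` reduces every
weight to the sums `∑_z (-1)^⟨x, z⟩ = 4^t [x = 0]` and `∑_z (-1)^(Q z + ⟨x, z⟩) = 2^t (-1)^(Q x)`.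
So a codeword with `x ≠ 0` has weight `2^(2t-2)` or `2^(2t-2) + 2^(t-1)`, and the only other
nonzero codeword is the all-one word. Distinct evaluation points make the code projective,
and the positive weights make the evaluation map injective, so the dimension is `2t + 1`. -/

open Finset Matrix

section Weights

variable {ι : Type*}

@[simp]
lemma wt_zero : wt (0 : ι → ZMod 2) = 0 := by simp [wt]

lemma wt_eq_zero_iff [Finite ι] {c : ι → ZMod 2} : wt c = 0 ↔ c = 0 := by
  rw [wt, ← Nat.le_zero, ← not_lt, Finite.card_pos_iff]
  simp [funext_iff]

lemma wt_eq_card_iff [Fintype ι] {c : ι → ZMod 2} : wt c = Fintype.card ι ↔ c = 1 := by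
  have ne_zero_iff (a : ZMod 2) : a ≠ 0 ↔ a = 1 := by revert a; decide
  classical
  rw [wt, Nat.card_eq_fintype_card, Fintype.card_subtype, ← Finset.card_univ,
    Finset.card_filter_eq_iff]
  simp [ne_zero_iff, funext_iff]

lemma weightCount_ne_zero_iff [Finite ι] {C : Set (ι → ZMod 2)} {w : ℕ} :
    weightCount C w ≠ 0 ↔ ∃ c ∈ C, wt c = w := by
  rw [weightCount, ← Nat.pos_iff_ne_zero, Finite.card_pos_iff]
  simp

lemma numNonzeroWeights_eq_ncard [Finite ι] (C : Set (ι → ZMod 2)) :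
    numNonzeroWeights C = (wt '' (C \ {0})).ncard := by
  rw [numNonzeroWeights, Nat.card_coe_set_eq]
  congr 1
  ext w
  simp only [Set.mem_ofPred_eq, weightCount_ne_zero_iff, Set.mem_image, Set.mem_sdiff,
    Set.mem_singleton_iff, Nat.one_le_iff_ne_zero]
  constructor
  · rintro ⟨hw, c, hc, rfl⟩
    exact ⟨c, ⟨hc, fun h => hw (wt_eq_zero_iff.2 h)⟩, rfl⟩
  · rintro ⟨c, ⟨hc, hc0⟩, rfl⟩
    exact ⟨fun h => hc0 (wt_eq_zero_iff.1 h), c, hc, rfl⟩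

lemma isMinDist_iff_isLeast {C : Set (ι → ZMod 2)} {d : ℕ} :
    IsMinDist C d ↔ IsLeast (wt '' (C \ {0})) d := by
  simp only [IsMinDist, IsLeast, lowerBounds, Set.mem_image, Set.mem_sdiff,
    Set.mem_singleton_iff, Set.mem_ofPred_eq]
  aesop

lemma weightCount_card_eq_one [Fintype ι] {C : Set (ι → ZMod 2)} (h : 1 ∈ C) :
    weightCount C (Fintype.card ι) = 1 := by
  rw [weightCount, Nat.card_eq_one_iff_exists]
  exact ⟨⟨1, h, wt_eq_card_iff.2 rfl⟩, fun ⟨c, _, hc⟩ => Subtype.ext (wt_eq_card_iff.1 hc)⟩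

lemma isProjective_of_separating [Fintype ι] {C : Set (ι → ZMod 2)}
    (hnz : ∀ i, ∃ c ∈ C, c i ≠ 0) (hsep : ∀ i j, i ≠ j → ∃ c ∈ C, c i ≠ c j) :
    IsProjective C := by
  classical
  intro x hx hx0
  set S := univ.filter (x · ≠ 0)
  have hwt : wt x = #S := by rw [wt, Nat.card_eq_fintype_card, Fintype.card_subtype]
  have hsum (c) (hc : c ∈ C) : ∑ i ∈ S, c i = 0 := by
    have mul_eq (a b : ZMod 2) : a * b = if a ≠ 0 then b else 0 := by revert a b; decide
    rw [← hx c hc, finsum_eq_sum_of_fintype, Finset.sum_filter]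
    simp_rw [mul_eq]
  have hS : S.Nonempty := by
    obtain ⟨i, hi⟩ := Function.ne_iff.1 hx0
    exact ⟨i, by simpa [S] using hi⟩
  by_contra! hlt
  obtain hS1 | hS2 : #S = 1 ∨ #S = 2 := by have := hS.card_pos; omega
  · obtain ⟨i, hSi⟩ := Finset.card_eq_one.1 hS1
    obtain ⟨c, hc, hci⟩ := hnz i
    exact hci (by simpa [hSi] using hsum c hc)
  · obtain ⟨i, j, hij, hSij⟩ := Finset.card_eq_two.1 hS2
    obtain ⟨c, hc, hcij⟩ := hsep i j hij
    have := hsum c hc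
    rw [hSij, Finset.sum_pair hij, CharTwo.add_eq_zero] at this
    exact hcij this

end Weights

def signChar : AddChar (ZMod 2) ℤ where
  toFun a := if a = 0 then 1 else -1
  map_zero_eq_one' := rfl
  map_add_eq_mul' := by decide

lemma signChar_eq_one_iff {a : ZMod 2} : signChar a = 1 ↔ a = 0 := by
  revert a; decide

lemma sum_signChar_dotProduct {t : ℕ} (y : Fin t → ZMod 2) :
    ∑ b, signChar (y ⬝ᵥ b) = if y = 0 then 2 ^ t else 0 := by
  classical
  let ψ := signChar.compAddMonoidHom (AddMonoidHom.mk' (y ⬝ᵥ ·) (dotProduct_add y))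
  have hψ : ψ = 0 ↔ y = 0 := by
    simp only [AddChar.eq_zero_iff, ψ, AddChar.compAddMonoidHom_apply, AddMonoidHom.mk'_apply,
      signChar_eq_one_iff, dotProduct_eq_zero_iff]
  change ∑ b, ψ b = _
  rw [AddChar.sum_eq_ite]
  simp only [hψ, Fintype.card_fun, ZMod.card, Fintype.card_fin, Nat.cast_pow, Nat.cast_ofNat]

abbrev HypSpace (t : ℕ) : Type := (Fin t → ZMod 2) × (Fin t → ZMod 2)

def hypForm {t : ℕ} (z : HypSpace t) : ZMod 2 := z.1 ⬝ᵥ z.2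

@[simp]
lemma hypForm_zero {t : ℕ} : hypForm (0 : HypSpace t) = 0 := dotProduct_zero _

def stdPairing {t : ℕ} (x z : HypSpace t) : ZMod 2 := x.1 ⬝ᵥ z.1 + x.2 ⬝ᵥ z.2

lemma sum_signChar_hypForm_add_stdPairing {t : ℕ} (x : HypSpace t) :
    ∑ z, signChar (hypForm z + stdPairing x z) = 2 ^ t * signChar (hypForm x) := by
  -- summing over `b` first, character orthogonality keeps only the term `a = x.2`
  have split (a b : Fin t → ZMod 2) :
      hypForm (a, b) + stdPairing x (a, b) = x.1 ⬝ᵥ a + (a + x.2) ⬝ᵥ b := by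
    simp only [hypForm, stdPairing, add_dotProduct]; ring
  have char_two (a : Fin t → ZMod 2) : a + x.2 = 0 ↔ a = x.2 := by
    simp only [funext_iff, Pi.add_apply, Pi.zero_apply, CharTwo.add_eq_zero]
  simp_rw [Fintype.sum_prod_type, split, AddChar.map_add_eq_mul, ← Finset.mul_sum,
    sum_signChar_dotProduct, char_two, mul_ite, mul_zero, Finset.sum_ite_eq',
    Finset.mem_univ, if_true, hypForm, mul_comm]

lemma sum_signChar_stdPairing {t : ℕ} (x : HypSpace t) :
    ∑ z, signChar (stdPairing x z) = if x = 0 then 4 ^ t else 0 := by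
  simp_rw [Fintype.sum_prod_type, stdPairing, AddChar.map_add_eq_mul, ← Finset.sum_mul_sum,
    sum_signChar_dotProduct, Prod.ext_iff]
  simp only [Prod.fst_zero, Prod.snd_zero]
  split_ifs <;> simp_all [← mul_pow]

lemma sum_signChar_hypForm {t : ℕ} : ∑ z : HypSpace t, signChar (hypForm z) = 2 ^ t := by
  simpa [stdPairing, hypForm] using sum_signChar_hypForm_add_stdPairing (0 : HypSpace t)

lemma four_mul_card_hypForm_eq_zero_stdPairing_eq {t : ℕ} (x : HypSpace t) (b : ZMod 2) :
    4 * (Fintype.card {z : HypSpace t // hypForm z = 0 ∧ stdPairing x z = b} : ℤ) =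
      4 ^ t + 2 ^ t +
        signChar b * ((if x = 0 then 4 ^ t else 0) + 2 ^ t * signChar (hypForm x)) := by
  have indicator (q r : ZMod 2) : (if q = 0 ∧ r = b then 4 else 0 : ℤ) =
      1 + signChar q + signChar b * signChar r + signChar b * signChar (q + r) := by
    revert q r b; decide
  rw [Fintype.card_subtype, Finset.card_filter, Nat.cast_sum, Finset.mul_sum]
  simp_rw [Nat.cast_ite, Nat.cast_one, Nat.cast_zero, mul_ite, mul_one, mul_zero, indicator,
    Finset.sum_add_distrib, ← Finset.mul_sum, sum_signChar_stdPairing, sum_signChar_hypForm,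
    sum_signChar_hypForm_add_stdPairing]
  rw [Finset.sum_const, Finset.card_univ, nsmul_one]
  simp only [Fintype.card_prod, Fintype.card_fun, ZMod.card, Fintype.card_fin, Nat.cast_mul,
    Nat.cast_pow, Nat.cast_ofNat, ← mul_pow]
  ring

lemma card_hypForm_eq_zero (u : ℕ) :
    Fintype.card {z : HypSpace (u + 1) // hypForm z = 0} = 2 ^ (2 * u + 1) + 2 ^ u := by
  have h := four_mul_card_hypForm_eq_zero_stdPairing_eq (0 : HypSpace (u + 1)) 0
  rw [Fintype.card_congr (Equiv.subtypeEquivRight (q := fun z => hypForm z = 0)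
    fun z => by simp [stdPairing])] at h
  simp only [if_pos, hypForm_zero, AddChar.map_zero_eq_one, one_mul, mul_one, pow_succ] at h
  zify
  rw [pow_succ, pow_mul, show (2 : ℤ) ^ 2 = 4 by norm_num]
  linarith

lemma card_hypForm_eq_zero_stdPairing_eq {u : ℕ} {x : HypSpace (u + 1)} (hx : x ≠ 0)
    (b : ZMod 2) :
    Fintype.card {z : HypSpace (u + 1) // hypForm z = 0 ∧ stdPairing x z = b} =
      if b = hypForm x then 2 ^ (2 * u) + 2 ^ u else 2 ^ (2 * u) := by
  have sign_mul (q : ZMod 2) : signChar b * signChar q = if b = q then 1 else -1 := by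
    revert b q; decide
  have h := four_mul_card_hypForm_eq_zero_stdPairing_eq x b
  rw [if_neg hx, zero_add, mul_left_comm, sign_mul, pow_succ, pow_succ] at h
  zify
  rw [pow_mul, show (2 : ℤ) ^ 2 = 4 by norm_num]
  split_ifs at h ⊢ <;> linarith

section AffineEval

variable {ι : Type*} {t : ℕ}

def affineEval (p : ι → HypSpace t) : HypSpace t × ZMod 2 →ₗ[ZMod 2] ι → ZMod 2 where
  toFun y i := stdPairing y.1 (p i) + y.2
  map_add' y y' := by
    ext i
    simp only [stdPairing, Prod.fst_add, Prod.snd_add, add_dotProduct, Pi.add_apply]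
    ring
  map_smul' r y := by
    ext i
    simp only [stdPairing, Prod.smul_fst, Prod.smul_snd, smul_dotProduct, smul_eq_mul,
      Pi.smul_apply, RingHom.id_apply]
    ring

lemma affineEval_apply (p : ι → HypSpace t) (x : HypSpace t) (β : ZMod 2) (i : ι) :
    affineEval p (x, β) i = stdPairing x (p i) + β := rfl

lemma affineEval_zero_left (p : ι → HypSpace t) (β : ZMod 2) :
    affineEval p (0, β) = fun _ => β := by
  ext i
  simp [affineEval_apply, stdPairing]

lemma exists_stdPairing_ne {a b : HypSpace t} (hab : a ≠ b) :
    ∃ x, stdPairing x a ≠ stdPairing x b := by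
  by_contra! h
  have h₁ (w : Fin t → ZMod 2) : (a.1 - b.1) ⬝ᵥ w = 0 := by
    simpa [stdPairing, dotProduct_comm w, sub_dotProduct, sub_eq_zero] using h (w, 0)
  have h₂ (w : Fin t → ZMod 2) : (a.2 - b.2) ⬝ᵥ w = 0 := by
    simpa [stdPairing, dotProduct_comm w, sub_dotProduct, sub_eq_zero] using h (0, w)
  exact hab (Prod.ext (sub_eq_zero.1 (dotProduct_eq_zero_iff.1 h₁))
    (sub_eq_zero.1 (dotProduct_eq_zero_iff.1 h₂)))

lemma isProjective_range_affineEval [Fintype ι] {p : ι → HypSpace t} (hp : p.Injective) :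
    IsProjective (LinearMap.range (affineEval p) : Set (ι → ZMod 2)) := by
  refine isProjective_of_separating (fun i => ⟨_, LinearMap.mem_range_self _ (0, 1), ?_⟩)
    fun i j hij => ?_
  · simp [affineEval_zero_left]
  · obtain ⟨x, hx⟩ := exists_stdPairing_ne (hp.ne hij)
    exact ⟨_, LinearMap.mem_range_self _ (x, 0), by simpa [affineEval_apply] using hx⟩

end AffineEval

section QuadricCode

variable {ι : Type*} {u : ℕ} (e : ι ≃ {z : HypSpace (u + 1) // hypForm z = 0})

def quadricCode : Submodule (ZMod 2) (ι → ZMod 2) :=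
  LinearMap.range (affineEval (Subtype.val ∘ e))

lemma wt_affineEval_quadric {x : HypSpace (u + 1)} (hx : x ≠ 0) (β : ZMod 2) :
    wt (affineEval (Subtype.val ∘ e) (x, β)) =
      if β = hypForm x then 2 ^ (2 * u) else 2 ^ (2 * u) + 2 ^ u := by
  have add_ne_zero_iff (a : ZMod 2) : a + β ≠ 0 ↔ a = β + 1 := by revert a β; decide
  have add_one_eq_iff (q : ZMod 2) : β + 1 = q ↔ ¬β = q := by revert β q; decide
  simp only [wt, affineEval_apply, Function.comp_apply]
  rw [Nat.card_congr ((e.subtypeEquiv (q := fun z => stdPairing x z.1 = β + 1)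
    fun i => add_ne_zero_iff _).trans (Equiv.subtypeSubtypeEquivSubtypeInter
      (fun z => hypForm z = 0) (fun z => stdPairing x z = β + 1))),
    Nat.card_eq_fintype_card, card_hypForm_eq_zero_stdPairing_eq hx]
  simp only [add_one_eq_iff, ite_not]

lemma injective_affineEval_quadric : Function.Injective (affineEval (Subtype.val ∘ e)) := by
  rw [injective_iff_map_eq_zero]
  rintro ⟨x, β⟩ h
  by_cases hx : x = 0
  · subst hx
    have hβ := congrFun h (e.symm ⟨0, hypForm_zero⟩)
    rw [affineEval_zero_left] at hβ
    simp [hβ]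
  · have hwt := congrArg wt h
    rw [wt_affineEval_quadric e hx, wt_zero] at hwt
    split_ifs at hwt <;> simp at hwt

lemma finrank_quadricCode : Module.finrank (ZMod 2) (quadricCode e) = 2 * u + 3 := by
  rw [quadricCode, LinearMap.finrank_range_of_inj (injective_affineEval_quadric e)]
  simp only [Module.finrank_prod, Module.finrank_fin_fun, Module.finrank_self]
  ring

lemma wt_image_quadricCode [Fintype ι] :
    wt '' ((quadricCode e : Set (ι → ZMod 2)) \ {0}) =
      {2 ^ (2 * u), 2 ^ (2 * u) + 2 ^ u, Fintype.card ι} := by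
  have mem (y : HypSpace (u + 1) × ZMod 2) (hy : wt (affineEval (Subtype.val ∘ e) y) ≠ 0) :
      wt (affineEval (Subtype.val ∘ e) y) ∈ wt '' ((quadricCode e : Set (ι → ZMod 2)) \ {0}) :=
    Set.mem_image_of_mem _
      ⟨LinearMap.mem_range_self _ y, fun h => hy (by rw [Set.mem_singleton_iff.1 h, wt_zero])⟩
  apply subset_antisymm
  · rintro _ ⟨c, ⟨⟨⟨x, β⟩, rfl⟩, hc0⟩, rfl⟩
    by_cases hx : x = 0
    · subst hx
      obtain rfl | rfl := (by decide : ∀ b : ZMod 2, b = 0 ∨ b = 1) β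
      · exact absurd (map_zero _) hc0
      · rw [affineEval_zero_left]
        exact Or.inr (Or.inr (wt_eq_card_iff.2 rfl))
    · rw [wt_affineEval_quadric e hx]
      split_ifs <;> simp
  · obtain ⟨x, hx⟩ := exists_ne (0 : HypSpace (u + 1))
    rintro _ (rfl | rfl | rfl)
    · simpa [wt_affineEval_quadric e hx] using mem (x, hypForm x)
    · simpa [wt_affineEval_quadric e hx] using mem (x, hypForm x + 1)
    · have : Nonempty ι := ⟨e.symm ⟨0, hypForm_zero⟩⟩
      have hwt : wt (affineEval (Subtype.val ∘ e) (0, 1)) = Fintype.card ι := by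
        rw [affineEval_zero_left]; exact wt_eq_card_iff.2 rfl
      simpa [hwt] using mem (0, 1)

end QuadricCode

theorem exists_three_weight_code_plus_general (m : ℕ) (hmod4 : m % 4 = 3) :
    ∃ C : Submodule (ZMod 2) (Fin (2 ^ (m - 2) + 2 ^ ((m - 3) / 2)) → ZMod 2),
      Module.finrank (ZMod 2) C = m ∧
      IsMinDist (C : Set (Fin (2 ^ (m - 2) + 2 ^ ((m - 3) / 2)) → ZMod 2)) (2 ^ (m - 3)) ∧
      IsProjective (C : Set (Fin (2 ^ (m - 2) + 2 ^ ((m - 3) / 2)) → ZMod 2)) ∧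
      numNonzeroWeights (C : Set (Fin (2 ^ (m - 2) + 2 ^ ((m - 3) / 2)) → ZMod 2)) = 3 ∧
      weightCount (C : Set (Fin (2 ^ (m - 2) + 2 ^ ((m - 3) / 2)) → ZMod 2))
        (2 ^ (m - 2) + 2 ^ ((m - 3) / 2)) = 1 := by
  obtain ⟨u, rfl⟩ : ∃ u, m = 2 * u + 3 := ⟨(m - 3) / 2, by omega⟩
  rw [show 2 * u + 3 - 2 = 2 * u + 1 by omega, show 2 * u + 3 - 3 = 2 * u by omega,
    show 2 * u / 2 = u by omega]
  let e := (Fintype.equivFinOfCardEq (card_hypForm_eq_zero u)).symm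
  have hpow : 2 ^ (2 * u + 1) = 2 * 2 ^ (2 * u) := pow_succ' 2 (2 * u)
  have hpos : 0 < 2 ^ u := Nat.two_pow_pos u
  have hpos' : 0 < 2 ^ (2 * u) := Nat.two_pow_pos (2 * u)
  refine ⟨quadricCode e, finrank_quadricCode e, ?_, ?_, ?_, ?_⟩
  · rw [isMinDist_iff_isLeast, wt_image_quadricCode, Fintype.card_fin]
    refine ⟨Set.mem_insert _ _, ?_⟩
    rintro _ (rfl | rfl | rfl) <;> omega
  · exact isProjective_range_affineEval (Subtype.val_injective.comp e.injective)
  · rw [numNonzeroWeights_eq_ncard, wt_image_quadricCode, Fintype.card_fin, Set.ncard_eq_three]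
    refine ⟨_, _, _, ?_, ?_, ?_, rfl⟩ <;> omega
  · have hone : (1 : Fin _ → ZMod 2) ∈ quadricCode e := ⟨(0, 1), affineEval_zero_left _ 1⟩
    simpa using weightCount_card_eq_one hone

theorem exists_three_weight_code_plus (m : ℕ) (hm : 7 ≤ m) (hmod4 : m % 4 = 3) :
    ∃ C : Submodule (ZMod 2) (Fin (2 ^ (m - 2) + 2 ^ ((m - 3) / 2)) → ZMod 2),
      Module.finrank (ZMod 2) C = m ∧
      IsMinDist (C : Set (Fin (2 ^ (m - 2) + 2 ^ ((m - 3) / 2)) → ZMod 2)) (2 ^ (m - 3)) ∧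
      IsProjective (C : Set (Fin (2 ^ (m - 2) + 2 ^ ((m - 3) / 2)) → ZMod 2)) ∧
      numNonzeroWeights (C : Set (Fin (2 ^ (m - 2) + 2 ^ ((m - 3) / 2)) → ZMod 2)) = 3 ∧
      weightCount (C : Set (Fin (2 ^ (m - 2) + 2 ^ ((m - 3) / 2)) → ZMod 2))
        (2 ^ (m - 2) + 2 ^ ((m - 3) / 2)) = 1 :=
  exists_three_weight_code_plus_general m hmod4
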